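/- arXiv:1708.00440 — 5 statements merged into one kernel-verified Lean document; each statement's English description precedes it below -/
import Mathlib

section
/- The function Φ is even: for every real t, Φ(−t) = Φ(t). -/
/-!
Let `θ(x) = ∑_{n ∈ ℤ} exp (-π n² x)` and `g(t) = e^{t/2} θ(e^{2t})`. Jacobi's transformation
`θ(1/x) = √x θ(x)` says exactly that `g` is even. Differentiating the theta series termwise,
`2Φ = g'' - g/4`, and the second derivative of an even function is even.
-/

/-- Polya's function `Φ(t) = ∑_{n≥1} (4π²n⁴e^{9t/2} − 6πn²e^{5t/2}) e^{−πn²e^{2t}}`. -/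
noncomputable def Phi (t : ℝ) : ℝ :=
  ∑' n : ℕ,
    (4 * Real.pi ^ 2 * ((n : ℝ) + 1) ^ 4 * Real.exp (9 * t / 2)
      - 6 * Real.pi * ((n : ℝ) + 1) ^ 2 * Real.exp (5 * t / 2))
    * Real.exp (-Real.pi * ((n : ℝ) + 1) ^ 2 * Real.exp (2 * t))

open Real Nat

lemma Function.Even.iteratedDeriv_two_mul {𝕜 F : Type*} [NontriviallyNormedField 𝕜]
    [NormedAddCommGroup F] [NormedSpace 𝕜 F] {f : 𝕜 → F} (hf : f.Even) (m : ℕ) :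
    (iteratedDeriv (2 * m) f).Even := fun x => by
  simpa [show (fun x => f (-x)) = f from funext hf, pow_mul] using
    (iteratedDeriv_comp_neg (2 * m) f x).symm

lemma pow_mul_exp_neg_le {x : ℝ} (hx : 0 ≤ x) (k : ℕ) :
    x ^ k * exp (-x) ≤ 2 ^ k * k ! * exp (-(x / 2)) := by
  have hpow := pow_div_factorial_le_exp (x / 2) (by positivity) k
  rw [div_pow, div_div, div_le_iff₀ (by positivity)] at hpow
  calc x ^ k * exp (-x) ≤ exp (x / 2) * (2 ^ k * k !) * exp (-x) := by gcongr
    _ = 2 ^ k * k ! * exp (-(x / 2)) := by rw [mul_comm (exp _), mul_assoc, ← exp_add]; ring_nf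

lemma summable_exp_neg_mul_int_sq {b : ℝ} (hb : 0 < b) :
    Summable fun n : ℤ => exp (-(b * n ^ 2)) := by
  simpa [← mul_assoc, mul_div_cancel₀ _ pi_ne_zero] using
    summable_pow_mul_jacobiTheta₂_term_bound 0 (div_pos hb pi_pos) 0

/-- With `q = π n² e^{2t}`, the summand of `Φ` is `e^{t/2} (4q² - 6q) e^{-q}`, and
`thetaMoment 0 t = θ(e^{2t})`. -/
noncomputable def thetaMomentTerm (k : ℕ) (t : ℝ) (n : ℤ) : ℝ :=
  (π * n ^ 2 * exp (2 * t)) ^ k * exp (-(π * n ^ 2 * exp (2 * t)))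

noncomputable def thetaMoment (k : ℕ) (t : ℝ) : ℝ :=
  ∑' n : ℤ, thetaMomentTerm k t n

lemma thetaMomentTerm_le {c t : ℝ} (hct : c ≤ t) (k : ℕ) (n : ℤ) :
    ‖thetaMomentTerm k t n‖ ≤ 2 ^ k * k ! * exp (-(π * exp (2 * c) / 2 * n ^ 2)) := by
  have hq : 0 ≤ π * n ^ 2 * exp (2 * t) := by positivity
  rw [thetaMomentTerm, norm_of_nonneg (by positivity)]
  refine (pow_mul_exp_neg_le hq k).trans ?_
  gcongr
  calc π * exp (2 * c) / 2 * n ^ 2 = π * n ^ 2 * exp (2 * c) / 2 := by ring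
    _ ≤ π * n ^ 2 * exp (2 * t) / 2 := by gcongr

lemma summable_thetaMomentTerm (k : ℕ) (t : ℝ) : Summable (thetaMomentTerm k t) :=
  .of_norm_bounded ((summable_exp_neg_mul_int_sq (by positivity)).mul_left _)
    (thetaMomentTerm_le le_rfl k)

lemma hasDerivAt_thetaMomentTerm (k : ℕ) (n : ℤ) (t : ℝ) :
    HasDerivAt (thetaMomentTerm k · n)
      (2 * k * thetaMomentTerm k t n - 2 * thetaMomentTerm (k + 1) t n) t := by
  have hq : HasDerivAt (fun s => π * n ^ 2 * exp (2 * s)) (2 * (π * n ^ 2 * exp (2 * t))) t := by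
    refine (((hasDerivAt_id t).const_mul 2).exp.const_mul (π * n ^ 2)).congr_deriv ?_
    simp only [id]
    ring
  refine ((hq.fun_pow k).fun_mul hq.fun_neg.exp).congr_deriv ?_
  simp only [thetaMomentTerm]
  rcases k with _ | k
  · simp
    ring
  · simp only [Nat.add_sub_cancel, pow_succ]
    push_cast
    ring

lemma hasDerivAt_thetaMoment (k : ℕ) (t : ℝ) :
    HasDerivAt (thetaMoment k) (2 * k * thetaMoment k t - 2 * thetaMoment (k + 1) t) t := by
  set bound := fun (j : ℕ) (n : ℤ) => 2 ^ j * j ! * exp (-(π * exp (2 * (t - 1)) / 2 * n ^ 2))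
  have hbound (j : ℕ) : Summable (bound j) :=
    (summable_exp_neg_mul_int_sq (by positivity)).mul_left _
  have hle (n : ℤ) (y : ℝ) (hy : y ∈ Set.Ioi (t - 1)) :
      ‖2 * k * thetaMomentTerm k y n - 2 * thetaMomentTerm (k + 1) y n‖
        ≤ 2 * k * bound k n + 2 * bound (k + 1) n := by
    have hty : t - 1 ≤ y := le_of_lt hy
    refine (norm_sub_le _ _).trans (add_le_add ?_ ?_) <;> rw [norm_mul]
    · gcongr
      · simp
      · exact thetaMomentTerm_le hty k n
    · gcongr
      · simp
      · exact thetaMomentTerm_le hty (k + 1) n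
  have hderiv := hasDerivAt_tsum_of_isPreconnected
    (((hbound k).mul_left (2 * k : ℝ)).add ((hbound (k + 1)).mul_left 2))
    isOpen_Ioi isPreconnected_Ioi (fun n s _ => hasDerivAt_thetaMomentTerm k n s) hle
    (Set.mem_Ioi.2 (sub_one_lt t)) (summable_thetaMomentTerm k t) (Set.mem_Ioi.2 (sub_one_lt t))
  rwa [Summable.tsum_sub ((summable_thetaMomentTerm k t).mul_left _)
    ((summable_thetaMomentTerm (k + 1) t).mul_left _), tsum_mul_left, tsum_mul_left] at hderiv

lemma thetaMoment_zero_neg (t : ℝ) : thetaMoment 0 (-t) = exp t * thetaMoment 0 t := by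
  have hjacobi := tsum_exp_neg_mul_int_sq (exp_pos (2 * -t))
  have hsqrt : exp (2 * -t) ^ (1 / 2 : ℝ) = exp (-t) := by
    rw [← exp_mul]
    ring_nf
  have hinv : -π / exp (2 * -t) = -π * exp (2 * t) := by
    rw [mul_neg, exp_neg, div_inv_eq_mul]
  have hterm (s : ℝ) (n : ℤ) : thetaMomentTerm 0 s n = exp (-π * exp (2 * s) * n ^ 2) := by
    rw [thetaMomentTerm, pow_zero, one_mul]
    ring_nf
  rw [hsqrt, one_div, ← exp_neg, neg_neg] at hjacobi
  simpa only [thetaMoment, hterm, hinv] using hjacobi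

noncomputable def scaledTheta (t : ℝ) : ℝ := exp (t / 2) * thetaMoment 0 t

lemma scaledTheta_even : scaledTheta.Even := fun t => by
  rw [scaledTheta, scaledTheta, thetaMoment_zero_neg, ← mul_assoc, ← exp_add]
  ring_nf

lemma hasDerivAt_scaledTheta (t : ℝ) :
    HasDerivAt scaledTheta (exp (t / 2) * (thetaMoment 0 t / 2 - 2 * thetaMoment 1 t)) t := by
  refine (((hasDerivAt_id t).div_const 2).exp.mul (hasDerivAt_thetaMoment 0 t)).congr_deriv ?_
  simp only [id, Nat.cast_zero]
  ring

lemma hasDerivAt_deriv_scaledTheta (t : ℝ) :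
    HasDerivAt (deriv scaledTheta)
      (exp (t / 2) * (thetaMoment 0 t / 4 - 6 * thetaMoment 1 t + 4 * thetaMoment 2 t)) t := by
  rw [show deriv scaledTheta = _ from funext fun s => (hasDerivAt_scaledTheta s).deriv]
  refine (((hasDerivAt_id t).div_const 2).exp.mul (((hasDerivAt_thetaMoment 0 t).div_const 2).sub
    ((hasDerivAt_thetaMoment 1 t).const_mul 2))).congr_deriv ?_
  simp only [id, Pi.sub_apply, Nat.cast_zero, Nat.cast_one]
  ring

lemma two_mul_Phi (t : ℝ) :
    2 * Phi t = exp (t / 2) * (4 * thetaMoment 2 t - 6 * thetaMoment 1 t) := by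
  set F : ℤ → ℝ := fun n => exp (t / 2) * (4 * thetaMomentTerm 2 t n - 6 * thetaMomentTerm 1 t n)
  have hF : Summable F :=
    (((summable_thetaMomentTerm 2 t).mul_left 4).sub
      ((summable_thetaMomentTerm 1 t).mul_left 6)).mul_left _
  have hF_even : F.Even := fun n => by simp [F, thetaMomentTerm]
  have hPhi : Phi t = ∑' n : ℕ, F (n + 1 : ℕ) := by
    refine tsum_congr fun n => ?_
    rw [show 9 * t / 2 = t / 2 + 2 * t + 2 * t by ring, show 5 * t / 2 = t / 2 + 2 * t by ring]
    simp only [F, thetaMomentTerm, exp_add, neg_mul]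
    push_cast
    ring
  have hsum : ∑' n : ℤ, F n = exp (t / 2) * (4 * thetaMoment 2 t - 6 * thetaMoment 1 t) := by
    rw [tsum_mul_left, Summable.tsum_sub ((summable_thetaMomentTerm 2 t).mul_left 4)
      ((summable_thetaMomentTerm 1 t).mul_left 6), tsum_mul_left, tsum_mul_left]
    rfl
  rw [← hsum, tsum_int_eq_zero_add_two_mul_tsum_pnat hF_even hF,
    tsum_pnat_eq_tsum_succ (f := fun n : ℕ => F n), hPhi]
  simp [F, thetaMomentTerm]

lemma two_mul_Phi_eq_iteratedDeriv (t : ℝ) :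
    2 * Phi t = iteratedDeriv 2 scaledTheta t - scaledTheta t / 4 := by
  rw [iteratedDeriv_succ, iteratedDeriv_one, (hasDerivAt_deriv_scaledTheta t).deriv, two_mul_Phi,
    scaledTheta]
  ring

/-- The function `Φ` is even. -/
theorem Phi_even (t : ℝ) : Phi (-t) = Phi t := by
  have h := two_mul_Phi_eq_iteratedDeriv (-t)
  rw [scaledTheta_even t, scaledTheta_even.iteratedDeriv_two_mul 1 t,
    ← two_mul_Phi_eq_iteratedDeriv] at h
  linarith
end

section
/- Abel inversion of the counting function: for every real v > 0, (1/π)·∫₀^v log(√E/π) / (√E·√(v−E)) dE = log(√v/(2π)). -/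
/-!
The substitution `E = v sin² θ` turns `dE / (√E √(v - E))` into `2 dθ` on `(0, π/2)`, and
`log (√(v sin² θ) / π) = log (sin θ) + log (√v / π)` there. The classical value
`∫₀^{π/2} log (sin θ) dθ = -(π/2) log 2` then gives `π (log (√v / π) - log 2)`.
-/

open Real Set intervalIntegral

theorem integral_div_sqrt_mul_sqrt_sub_eq_two_mul_integral_sin_sq (g : ℝ → ℝ) {v : ℝ}
    (hv : 0 < v) :
    ∫ E in (0:ℝ)..v, g E / (√E * √(v - E)) = 2 * ∫ θ in (0:ℝ)..π / 2, g (v * sin θ ^ 2) := by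
  have hπ : (0:ℝ) ≤ π / 2 := by positivity
  have hderiv (θ : ℝ) :
      HasDerivAt (fun θ ↦ v * sin θ ^ 2) (v * (2 * sin θ * cos θ)) θ := by
    simpa using ((hasDerivAt_sin θ).pow 2).const_mul v
  have hsubst := integral_comp_mul_deriv_of_deriv_nonneg
    (g := fun E ↦ g E / (√E * √(v - E))) (by fun_prop) (fun θ _ ↦ hderiv θ) fun θ hθ ↦ by
      rw [min_eq_left hπ, max_eq_right hπ] at hθ
      have := sin_nonneg_of_nonneg_of_le_pi hθ.1.le (by linarith [hθ.2, pi_pos])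
      have := cos_nonneg_of_mem_Icc ⟨by linarith [hθ.1], hθ.2.le⟩
      positivity
  simp only [sin_zero, sin_pi_div_two, one_pow, mul_one, zero_pow two_ne_zero, mul_zero] at hsubst
  rw [← hsubst, ← integral_const_mul]
  refine integral_congr_Ioo_of_le hπ fun θ hθ ↦ ?_
  have hs : 0 < sin θ := sin_pos_of_pos_of_lt_pi hθ.1 (by linarith [hθ.2, pi_pos])
  have hc : 0 < cos θ := cos_pos_of_mem_Ioo ⟨by linarith [hθ.1], hθ.2⟩
  have hcos : v - v * sin θ ^ 2 = v * cos θ ^ 2 := by rw [cos_sq']; ring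
  simp only [Function.comp_apply]
  rw [hcos, sqrt_mul hv.le, sqrt_mul hv.le, sqrt_sq hs.le, sqrt_sq hc.le]
  field_simp
  rw [sq_sqrt hv.le, mul_comm]

/-- Abel inversion of the counting function:
`(1/π) ∫₀^v log(√E/π)/(√E √(v−E)) dE = log(√v/(2π))` for `v > 0`. -/
theorem abel_inversion_width (v : ℝ) (hv : 0 < v) :
    (1 / Real.pi) * ∫ E in (0:ℝ)..v,
        Real.log (Real.sqrt E / Real.pi) / (Real.sqrt E * Real.sqrt (v - E)) =
      Real.log (Real.sqrt v / (2 * Real.pi)) := by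
  have hlog : EqOn (fun θ ↦ log (√(v * sin θ ^ 2) / π)) (fun θ ↦ log (sin θ) + log (√v / π))
      (Ioo 0 (π / 2)) := fun θ hθ ↦ by
    have hs : 0 < sin θ := sin_pos_of_pos_of_lt_pi hθ.1 (by linarith [hθ.2, pi_pos])
    simp only
    rw [sqrt_mul hv.le, sqrt_sq hs.le, mul_comm, mul_div_assoc,
      log_mul hs.ne' (by positivity)]
  rw [integral_div_sqrt_mul_sqrt_sub_eq_two_mul_integral_sin_sq _ hv,
    integral_congr_Ioo_of_le (by positivity) hlog,
    integral_add (f := fun θ ↦ log (sin θ)) intervalIntegrable_log_sin intervalIntegrable_const,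
    integral_log_sin_zero_pi_div_two, integral_const, smul_eq_mul, sub_zero,
    div_mul_eq_div_div_swap, log_div (by positivity) two_ne_zero]
  field_simp
  ring
end

section
/- For every complex number ν, the function ψ(x) = ∫₀^∞ cosh(νt)·e^{−2πe^{x}·cosh t} dt is twice differentiable on ℝ and satisfies ψ''(x) = (4π²e^{2x} + ν²)·ψ(x) for all real x; that is, ψ solves the Schrödinger equation −ψ'' + 4π²e^{2x}ψ = Eψ with E = −ν². -/
/-!
Put `c = 2πeˣ` and `K(c) = ∫₀^∞ cosh(νt) e^{-c cosh t} dt`, so `ψ(x) = K(c)` and `dc/dx = c`.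
Against the super-exponential decay of `e^{-c cosh t}`, any continuous weight of exponential
growth is integrable and may be differentiated under the integral sign in `c`; this gives
`K' = -∫ cosh(νt) cosh t e^{-c cosh t}` and `K'' = ∫ cosh(νt) cosh² t e^{-c cosh t}`.
Bessel's equation `c²K'' + cK' = (c² + ν²)K` holds because, after `cosh² t = sinh² t + 1`, its
integrand is the `t`-derivative of `-e^{-c cosh t} (c sinh t cosh(νt) + ν sinh(νt))`, which
vanishes at `0` and at `∞`. Finally `ψ'' = c²K'' + cK'`.
-/

open MeasureTheory Set Filter Asymptotics Topology
open scoped Real Complex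

namespace Complex

lemma norm_cosh_le_exp_norm (z : ℂ) : ‖cosh z‖ ≤ rexp ‖z‖ := by
  have h₁ := norm_exp_le_exp_norm z
  have h₂ := norm_exp_le_exp_norm (-z)
  rw [norm_neg] at h₂
  calc ‖cosh z‖ = ‖cexp z + cexp (-z)‖ / 2 := by rw [cosh, norm_div]; norm_num
    _ ≤ rexp ‖z‖ := by linarith [norm_add_le (cexp z) (cexp (-z))]

lemma norm_sinh_le_exp_norm (z : ℂ) : ‖sinh z‖ ≤ rexp ‖z‖ := by
  have h₁ := norm_exp_le_exp_norm z
  have h₂ := norm_exp_le_exp_norm (-z)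
  rw [norm_neg] at h₂
  calc ‖sinh z‖ = ‖cexp z - cexp (-z)‖ / 2 := by rw [sinh, norm_div]; norm_num
    _ ≤ rexp ‖z‖ := by linarith [norm_sub_le (cexp z) (cexp (-z))]

lemma norm_exp_neg_mul_cosh (c t : ℝ) :
    ‖cexp (-(c : ℂ) * cosh t)‖ = rexp (-(c * Real.cosh t)) := by
  rw [norm_exp, ← ofReal_cosh, ← ofReal_neg, ← ofReal_mul, ofReal_re, neg_mul]

end Complex

def HasExpGrowth (g : ℝ → ℂ) : Prop := ∃ a : ℝ, g =O[atTop] fun t => rexp (a * t)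

lemma HasExpGrowth.mul {f g : ℝ → ℂ} (hf : HasExpGrowth f) (hg : HasExpGrowth g) :
    HasExpGrowth fun t => f t * g t := by
  obtain ⟨a, ha⟩ := hf
  obtain ⟨b, hb⟩ := hg
  exact ⟨a + b, (ha.mul hb).congr_right fun t => by rw [← Real.exp_add, add_mul]⟩

lemma hasExpGrowth_of_norm_le_exp_norm {f : ℂ → ℂ} (hf : ∀ z, ‖f z‖ ≤ rexp ‖z‖) (ν : ℂ) :
    HasExpGrowth fun t : ℝ => f (ν * t) := by
  refine ⟨‖ν‖, IsBigO.of_bound 1 ?_⟩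
  filter_upwards [eventually_ge_atTop 0] with t ht
  rw [one_mul, Real.norm_of_nonneg (Real.exp_pos _).le]
  simpa [abs_of_nonneg ht] using hf (ν * t)

lemma hasExpGrowth_cosh_mul (ν : ℂ) : HasExpGrowth fun t : ℝ => Complex.cosh (ν * t) :=
  hasExpGrowth_of_norm_le_exp_norm Complex.norm_cosh_le_exp_norm ν

lemma hasExpGrowth_sinh_mul (ν : ℂ) : HasExpGrowth fun t : ℝ => Complex.sinh (ν * t) :=
  hasExpGrowth_of_norm_le_exp_norm Complex.norm_sinh_le_exp_norm ν

lemma hasExpGrowth_cosh : HasExpGrowth fun t : ℝ => Complex.cosh t := by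
  simpa using hasExpGrowth_cosh_mul 1

lemma hasExpGrowth_sinh : HasExpGrowth fun t : ℝ => Complex.sinh t := by
  simpa using hasExpGrowth_sinh_mul 1

lemma isBigO_exp_neg_mul_cosh {c : ℝ} (hc : 0 < c) (b : ℝ) :
    (fun t : ℝ => cexp (-(c : ℂ) * Complex.cosh t)) =O[atTop] fun t => rexp (b * t) := by
  refine IsBigO.of_bound 1 ?_
  filter_upwards [eventually_ge_atTop 0, eventually_ge_atTop (4 * |b| / c)] with t ht₀ ht
  rw [one_mul, Complex.norm_exp_neg_mul_cosh, Real.norm_of_nonneg (Real.exp_pos _).le]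
  refine Real.exp_le_exp.2 ?_
  have hquad : t ^ 2 / 4 ≤ Real.cosh t := by
    rw [Real.cosh_eq]
    nlinarith [Real.quadratic_le_exp_of_nonneg ht₀, Real.exp_pos (-t)]
  have hct : 4 * |b| ≤ c * t := by rwa [div_le_iff₀' hc] at ht
  nlinarith [neg_abs_le b, mul_le_mul_of_nonneg_left hquad hc.le]

lemma HasExpGrowth.isBigO_mul_exp_neg_mul_cosh {g : ℝ → ℂ} (hg : HasExpGrowth g) {c : ℝ}
    (hc : 0 < c) :
    (fun t => g t * cexp (-(c : ℂ) * Complex.cosh t)) =O[atTop] fun t => rexp (-1 * t) := by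
  obtain ⟨a, ha⟩ := hg
  refine (ha.mul (isBigO_exp_neg_mul_cosh hc (-1 - a))).congr_right fun t => ?_
  rw [← Real.exp_add]; ring_nf

lemma HasExpGrowth.integrableOn_mul_exp_neg_mul_cosh {g : ℝ → ℂ} (hg : HasExpGrowth g)
    (hg_cont : Continuous g) {c : ℝ} (hc : 0 < c) :
    IntegrableOn (fun t => g t * cexp (-(c : ℂ) * Complex.cosh t)) (Ioi 0) := by
  have hcont : Continuous fun t : ℝ => g t * cexp (-(c : ℂ) * Complex.cosh t) := by fun_prop
  exact (integrableOn_Ici_iff_integrableOn_Ioi (by finiteness)).mp <|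
    (hcont.continuousOn.locallyIntegrableOn measurableSet_Ici).integrableOn_of_isBigO_atTop
      (hg.isBigO_mul_exp_neg_mul_cosh hc)
      ⟨Ioi 0, Ioi_mem_atTop 0, exp_neg_integrableOn_Ioi 0 one_pos⟩

lemma HasExpGrowth.tendsto_mul_exp_neg_mul_cosh {g : ℝ → ℂ} (hg : HasExpGrowth g) {c : ℝ}
    (hc : 0 < c) : Tendsto (fun t => g t * cexp (-(c : ℂ) * Complex.cosh t)) atTop (𝓝 0) :=
  (hg.isBigO_mul_exp_neg_mul_cosh hc).trans_tendsto <| by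
    simpa using Real.tendsto_exp_neg_atTop_nhds_zero

noncomputable def coshTransform (g : ℝ → ℂ) (c : ℝ) : ℂ :=
  ∫ t in Ioi (0 : ℝ), g t * cexp (-(c : ℂ) * Complex.cosh t)

lemma hasDerivAt_mul_exp_neg_mul_cosh (w : ℂ) (t c : ℝ) :
    HasDerivAt (fun c : ℝ => w * cexp (-(c : ℂ) * Complex.cosh t))
      (-(w * Complex.cosh t * cexp (-(c : ℂ) * Complex.cosh t))) c := by
  have h := (((hasDerivAt_id c).ofReal_comp.neg.mul_const (Complex.cosh t)).cexp).const_mul w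
  refine h.congr_deriv ?_
  simp only [Pi.neg_apply, id, Complex.ofReal_one]
  ring

theorem hasDerivAt_coshTransform {g : ℝ → ℂ} (hg : HasExpGrowth g) (hg_cont : Continuous g)
    {c : ℝ} (hc : 0 < c) :
    HasDerivAt (coshTransform g) (-coshTransform (fun t => g t * Complex.cosh t) c) c := by
  have hc₂ : 0 < c / 2 := half_pos hc
  have hgc := hg.mul hasExpGrowth_cosh
  have hgc_cont : Continuous fun t => g t * Complex.cosh t := by fun_prop
  have hbound : ∀ t, ∀ c' ∈ Metric.ball c (c / 2),
      ‖-(g t * Complex.cosh t * cexp (-(c' : ℂ) * Complex.cosh t))‖ ≤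
        ‖g t * Complex.cosh t * cexp (-((c / 2 : ℝ) : ℂ) * Complex.cosh t)‖ := by
    intro t c' hc'
    have hc'c : c / 2 ≤ c' := by
      rw [Metric.mem_ball, Real.dist_eq, abs_lt] at hc'; linarith
    rw [norm_neg, norm_mul, norm_mul (_ * _), Complex.norm_exp_neg_mul_cosh,
      Complex.norm_exp_neg_mul_cosh]
    gcongr
  have h := hasDerivAt_integral_of_dominated_loc_of_deriv_le (μ := volume.restrict (Ioi 0))
    (Metric.ball_mem_nhds c hc₂)
    (Eventually.of_forall fun c' => (by fun_prop : Continuous fun t : ℝ =>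
      g t * cexp (-(c' : ℂ) * Complex.cosh t)).aestronglyMeasurable)
    (hg.integrableOn_mul_exp_neg_mul_cosh hg_cont hc)
    (by fun_prop : Continuous fun t : ℝ =>
      -(g t * Complex.cosh t * cexp (-(c : ℂ) * Complex.cosh t))).aestronglyMeasurable
    (ae_of_all _ hbound) (hgc.integrableOn_mul_exp_neg_mul_cosh hgc_cont hc₂).norm
    (ae_of_all _ fun t c' _ => hasDerivAt_mul_exp_neg_mul_cosh (g t) t c')
  have hderiv := h.2
  rw [integral_neg] at hderiv
  exact hderiv

noncomputable def besselPrimitive (ν : ℂ) (c t : ℝ) : ℂ :=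
  -((c : ℂ) * (Complex.sinh t * Complex.cosh (ν * t) * cexp (-(c : ℂ) * Complex.cosh t))
    + ν * (Complex.sinh (ν * t) * cexp (-(c : ℂ) * Complex.cosh t)))

lemma hasDerivAt_besselPrimitive (ν : ℂ) (c t : ℝ) :
    HasDerivAt (besselPrimitive ν c)
      ((c : ℂ) ^ 2 * (Complex.cosh (ν * t) * Complex.cosh t * Complex.cosh t *
          cexp (-(c : ℂ) * Complex.cosh t))
        - c * (Complex.cosh (ν * t) * Complex.cosh t * cexp (-(c : ℂ) * Complex.cosh t))
        - ((c : ℂ) ^ 2 + ν ^ 2) * (Complex.cosh (ν * t) * cexp (-(c : ℂ) * Complex.cosh t))) t := by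
  have hid : HasDerivAt (fun s : ℂ => s) 1 (t : ℂ) := hasDerivAt_id _
  have hcosh := hid.ccosh.comp_ofReal
  have hsinh := hid.csinh.comp_ofReal
  have hcoshν := (hid.const_mul ν).ccosh.comp_ofReal
  have hsinhν := (hid.const_mul ν).csinh.comp_ofReal
  have hexp := (hcosh.const_mul (-(c : ℂ))).cexp
  have h := (((hsinh.mul hcoshν).mul hexp).const_mul (c : ℂ) |>.add
    ((hsinhν.mul hexp).const_mul ν)).neg
  refine h.congr_deriv ?_
  simp only [Pi.mul_apply]
  linear_combination (-(c : ℂ) ^ 2 * Complex.cosh (ν * t) * cexp (-(c : ℂ) * Complex.cosh t)) *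
    Complex.cosh_sq_sub_sinh_sq (t : ℂ)

theorem coshTransform_bessel (ν : ℂ) {c : ℝ} (hc : 0 < c) :
    (c : ℂ) ^ 2 * coshTransform (fun t => Complex.cosh (ν * t) * Complex.cosh t * Complex.cosh t) c
      - c * coshTransform (fun t => Complex.cosh (ν * t) * Complex.cosh t) c
      = ((c : ℂ) ^ 2 + ν ^ 2) * coshTransform (fun t => Complex.cosh (ν * t)) c := by
  have hg₀ := hasExpGrowth_cosh_mul ν
  have hg₁ := hg₀.mul hasExpGrowth_cosh
  have hi₀ := hg₀.integrableOn_mul_exp_neg_mul_cosh (by fun_prop) hc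
  have hi₁ := hg₁.integrableOn_mul_exp_neg_mul_cosh (by fun_prop) hc
  have hi₂ := (hg₁.mul hasExpGrowth_cosh).integrableOn_mul_exp_neg_mul_cosh (by fun_prop) hc
  have hlim : Tendsto (besselPrimitive ν c) atTop (𝓝 0) := by
    have h := ((((hasExpGrowth_sinh.mul hg₀).tendsto_mul_exp_neg_mul_cosh hc).const_mul (c : ℂ)).add
      (((hasExpGrowth_sinh_mul ν).tendsto_mul_exp_neg_mul_cosh hc).const_mul ν)).neg
    rwa [mul_zero, mul_zero, add_zero, neg_zero] at h
  have hftc := integral_Ioi_of_hasDerivAt_of_tendsto' (fun t _ => hasDerivAt_besselPrimitive ν c t)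
    (((hi₂.const_mul _).sub (hi₁.const_mul _)).sub (hi₀.const_mul _)) hlim
  rw [integral_sub, integral_sub, integral_const_mul, integral_const_mul,
    integral_const_mul] at hftc
  · simp only [besselPrimitive, Complex.ofReal_zero, Complex.sinh_zero, mul_zero, zero_mul,
      add_zero, neg_zero, sub_zero] at hftc
    exact sub_eq_zero.1 hftc
  exacts [hi₂.const_mul _, hi₁.const_mul _, (hi₂.const_mul _).sub (hi₁.const_mul _),
    hi₀.const_mul _]

/-- `ψ(x) = K_ν(2πeˣ) = ∫₀^∞ cosh(νt) e^{−2πeˣ cosh t} dt` solves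
`−ψ'' + 4π²e^{2x} ψ = −ν² ψ`, i.e. `ψ'' = (4π²e^{2x} + ν²) ψ`. -/
theorem bessel_solves_schroedinger (ν : ℂ) :
    ∃ ψ' ψ'' : ℝ → ℂ,
      (∀ x : ℝ, HasDerivAt
        (fun x : ℝ => ∫ t in Set.Ioi (0:ℝ),
          Complex.cosh (ν * t) * Complex.exp (-(2 * Real.pi * Real.exp x : ℝ) * Complex.cosh t))
        (ψ' x) x) ∧
      (∀ x : ℝ, HasDerivAt ψ' (ψ'' x) x) ∧
      (∀ x : ℝ, ψ'' x = (4 * Real.pi ^ 2 * Real.exp (2 * x) + ν ^ 2) *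
        ∫ t in Set.Ioi (0:ℝ),
          Complex.cosh (ν * t) * Complex.exp (-(2 * Real.pi * Real.exp x : ℝ) * Complex.cosh t)) := by
  let C : ℝ → ℝ := fun x => 2 * π * rexp x
  have hC (x : ℝ) : HasDerivAt C (C x) x := (Real.hasDerivAt_exp x).const_mul (2 * π)
  have hC_pos (x : ℝ) : 0 < C x := by positivity
  let K₀ := coshTransform fun t => Complex.cosh (ν * t)
  let K₁ := coshTransform fun t => Complex.cosh (ν * t) * Complex.cosh t
  let K₂ := coshTransform fun t => Complex.cosh (ν * t) * Complex.cosh t * Complex.cosh t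
  have hg₀ := hasExpGrowth_cosh_mul ν
  have hK₀ (x : ℝ) : HasDerivAt (fun x => K₀ (C x)) (C x • -K₁ (C x)) x :=
    (hasDerivAt_coshTransform hg₀ (by fun_prop) (hC_pos x)).scomp x (hC x)
  have hK₁ (x : ℝ) : HasDerivAt (fun x => K₁ (C x)) (C x • -K₂ (C x)) x :=
    (hasDerivAt_coshTransform (hg₀.mul hasExpGrowth_cosh) (by fun_prop) (hC_pos x)).scomp x (hC x)
  refine ⟨fun x => -(C x * K₁ (C x)), fun x => C x ^ 2 * K₂ (C x) - C x * K₁ (C x),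
    fun x => ?_, fun x => ?_, fun x => ?_⟩
  · exact (hK₀ x).congr_deriv (by rw [Complex.real_smul]; ring)
  · exact ((hC x).ofReal_comp.mul (hK₁ x)).neg.congr_deriv (by rw [Complex.real_smul]; ring)
  · have hC_sq : C x ^ 2 = 4 * π ^ 2 * rexp (2 * x) := by
      simp only [C, mul_pow, ← Real.exp_nat_mul]
      ring_nf
    calc (C x : ℂ) ^ 2 * K₂ (C x) - C x * K₁ (C x) = ((C x : ℂ) ^ 2 + ν ^ 2) * K₀ (C x) :=
          coshTransform_bessel ν (hC_pos x)
      _ = _ := by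
        congr 1
        rw [← Complex.ofReal_pow, hC_sq]
        push_cast
        ring
end

section
/- Closed form for the tunnelling time of the Morse family: let β, γ, E be real numbers with β ≥ 0 and β² < 16π²(γ − E). Then (1/2)·∫₀^∞ (4π²e^{2w} − βe^{w} + γ − E)^{−1/2} dw = (1/(2√(γ−E)))·log[ (2√(γ−E)·√(γ−E+4π²−β) + 2(γ−E) − β) / (4π√(γ−E) − β) ]. -/
/-!
Writing `Q t = c t² - b t + a`, one has `a e^{2w} - b e^w + c = e^{2w} Q(e^{-w})`, so the integrand
is `e^{-w} / √(Q(e^{-w}))`. Since `b² < 4ac`, `Q` is positive and the classical primitive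
`log (2√c √(Q t) + Q' t) / √c` of `1 / √(Q t)` is defined everywhere; composing it with `e^{-w}`
gives a primitive of the integrand whose limit at `+∞` is its value at `t = 0`. The integral over
`(0, ∞)` is therefore the difference of the primitive at `t = 1` and `t = 0`.
-/

open MeasureTheory Filter Topology Real Set

section
variable {a b c : ℝ}

lemma pos_of_sq_lt_four_mul_mul (ha : 0 < a) (h : b ^ 2 < 4 * a * c) : 0 < c := by
  nlinarith [sq_nonneg b]

lemma quadratic_pos (hc : 0 < c) (h : b ^ 2 < 4 * a * c) (t : ℝ) :
    0 < c * t ^ 2 - b * t + a := by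
  nlinarith [sq_nonneg (2 * c * t - b)]

lemma abs_lt_two_sqrt_mul_sqrt_quadratic (hc : 0 < c) (h : b ^ 2 < 4 * a * c) (t : ℝ) :
    |2 * c * t - b| < 2 * √c * √(c * t ^ 2 - b * t + a) := by
  refine abs_lt_of_sq_lt_sq ?_ (by positivity)
  rw [mul_pow, mul_pow, sq_sqrt hc.le, sq_sqrt (quadratic_pos hc h t).le]
  linarith

lemma hasDerivAt_log_two_sqrt_mul_sqrt_quadratic (hc : 0 < c) (h : b ^ 2 < 4 * a * c)
    (t : ℝ) :
    HasDerivAt (fun t => log (2 * √c * √(c * t ^ 2 - b * t + a) + 2 * c * t - b))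
      (√c / √(c * t ^ 2 - b * t + a)) t := by
  have hQ := quadratic_pos hc h t
  have hsqrt : 0 < √(c * t ^ 2 - b * t + a) := sqrt_pos.2 hQ
  have harg : 0 < 2 * √c * √(c * t ^ 2 - b * t + a) + 2 * c * t - b := by
    linarith [neg_abs_le (2 * c * t - b), abs_lt_two_sqrt_mul_sqrt_quadratic hc h t]
  have hQ' : HasDerivAt (fun t => c * t ^ 2 - b * t + a) (2 * c * t - b) t := by
    refine ((((hasDerivAt_pow 2 t).const_mul c).fun_sub
      ((hasDerivAt_id' t).const_mul b)).add_const a).congr_deriv ?_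
    simp only [Nat.cast_ofNat, mul_one]
    ring
  convert ((((hQ'.sqrt hQ.ne').const_mul (2 * √c)).fun_add
    ((hasDerivAt_id' t).const_mul (2 * c))).sub_const b).log harg.ne' using 1
  have hc' := sq_sqrt hc.le
  generalize √(c * t ^ 2 - b * t + a) = s at hsqrt harg ⊢
  generalize √c = r at hc' harg ⊢
  rw [div_eq_div_iff hsqrt.ne' harg.ne']
  field_simp
  linear_combination (2 * s) * hc'

lemma sqrt_quadratic_exp (w : ℝ) :
    √(a * exp (2 * w) - b * exp w + c) = exp w * √(c * exp (-w) ^ 2 - b * exp (-w) + a) := by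
  have : a * exp (2 * w) - b * exp w + c = exp w ^ 2 * (c * exp (-w) ^ 2 - b * exp (-w) + a) := by
    rw [exp_neg, show exp (2 * w) = exp w ^ 2 by rw [sq, ← exp_add, two_mul]]
    field_simp
    ring
  rw [this, sqrt_mul (sq_nonneg _), sqrt_sq (exp_pos w).le]

lemma hasDerivAt_neg_log_two_sqrt_mul_sqrt_quadratic_exp_neg (hc : 0 < c)
    (h : b ^ 2 < 4 * a * c) (w : ℝ) :
    HasDerivAt
      (fun w => -log (2 * √c * √(c * exp (-w) ^ 2 - b * exp (-w) + a) + 2 * c * exp (-w) - b) / √c)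
      (√(a * exp (2 * w) - b * exp w + c))⁻¹ w := by
  have hsqrt : 0 < √(c * exp (-w) ^ 2 - b * exp (-w) + a) := sqrt_pos.2 (quadratic_pos hc h _)
  refine (((hasDerivAt_log_two_sqrt_mul_sqrt_quadratic hc h (exp (-w))).comp w
    (hasDerivAt_neg' w).exp).neg.div_const √c).congr_deriv ?_
  rw [sqrt_quadratic_exp, exp_neg]
  field_simp

theorem integral_inv_sqrt_quadratic_exp (ha : 0 < a) (h : b ^ 2 < 4 * a * c) :
    ∫ w in Ioi 0, (√(a * exp (2 * w) - b * exp w + c))⁻¹ =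
      log ((2 * √c * √(c + a - b) + 2 * c - b) / (2 * √a * √c - b)) / √c := by
  have hc := pos_of_sq_lt_four_mul_mul ha h
  have hlim := ((hasDerivAt_log_two_sqrt_mul_sqrt_quadratic hc h 0).continuousAt.tendsto.comp
    tendsto_exp_neg_atTop_nhds_zero).neg.div_const √c
  rw [integral_Ioi_of_hasDerivAt_of_nonneg'
    (fun w _ => hasDerivAt_neg_log_two_sqrt_mul_sqrt_quadratic_exp_neg hc h w)
    (fun w _ => by positivity) hlim]
  have h0 := abs_lt_two_sqrt_mul_sqrt_quadratic hc h 0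
  have h1 := abs_lt_two_sqrt_mul_sqrt_quadratic hc h 1
  simp only [mul_zero, zero_sub, abs_neg, ne_eq, OfNat.ofNat_ne_zero, not_false_eq_true, zero_pow,
    sub_self, zero_add, mul_one, one_pow, add_zero, neg_zero, exp_zero] at h0 h1 ⊢
  have hnum : 2 * √c * √(c - b + a) + 2 * c - b ≠ 0 := by linarith [neg_abs_le (2 * c - b)]
  have hden : 2 * √c * √a - b ≠ 0 := by linarith [le_abs_self b]
  rw [show c + a - b = c - b + a by ring, mul_right_comm 2 √a, log_div hnum hden]
  ring

end

theorem morse_tunnelling_time_closed_form_general (β γ E : ℝ)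
    (h : β ^ 2 < 16 * Real.pi ^ 2 * (γ - E)) :
    (1 / 2) * ∫ w in Set.Ioi (0:ℝ),
        (Real.sqrt (4 * Real.pi ^ 2 * Real.exp (2 * w) - β * Real.exp w + γ - E))⁻¹ =
      (1 / (2 * Real.sqrt (γ - E))) *
        Real.log ((2 * Real.sqrt (γ - E) * Real.sqrt (γ - E + 4 * Real.pi ^ 2 - β) +
            2 * (γ - E) - β) / (4 * Real.pi * Real.sqrt (γ - E) - β)) := by
  have hint := integral_inv_sqrt_quadratic_exp (a := 4 * π ^ 2) (b := β) (c := γ - E)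
    (by positivity) (by linarith)
  have hsqrt : √(4 * π ^ 2) = 2 * π := by
    rw [show 4 * π ^ 2 = (2 * π) ^ 2 by ring, sqrt_sq (by positivity)]
  have hassoc : ∀ w, 4 * π ^ 2 * exp (2 * w) - β * exp w + γ - E =
      4 * π ^ 2 * exp (2 * w) - β * exp w + (γ - E) := fun w => by ring
  simp only [hassoc, hint, hsqrt, show (2 : ℝ) * (2 * π) = 4 * π by ring]
  ring

/-- Closed form for the tunnelling time of the Morse family: for `β ≥ 0` and
`β² < 16π²(γ−E)`,
`(1/2)∫₀^∞ (4π²e^{2w} − βe^w + γ − E)^{−1/2} dw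
  = (1/(2√(γ−E))) log[(2√(γ−E)√(γ−E+4π²−β) + 2(γ−E) − β)/(4π√(γ−E) − β)]`. -/
theorem morse_tunnelling_time_closed_form (β γ E : ℝ) (hβ : 0 ≤ β)
    (h : β ^ 2 < 16 * Real.pi ^ 2 * (γ - E)) :
    (1 / 2) * ∫ w in Set.Ioi (0:ℝ),
        (Real.sqrt (4 * Real.pi ^ 2 * Real.exp (2 * w) - β * Real.exp w + γ - E))⁻¹ =
      (1 / (2 * Real.sqrt (γ - E))) *
        Real.log ((2 * Real.sqrt (γ - E) * Real.sqrt (γ - E + 4 * Real.pi ^ 2 - β) +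
            2 * (γ - E) - β) / (4 * Real.pi * Real.sqrt (γ - E) - β)) :=
  morse_tunnelling_time_closed_form_general β γ E h
end

section
/- The Tzitzeica potential has the same asymptotic width function as the Morse potential: let V(x) = 4π²·2^{−2/3}·(2e^{3x} + e^{−6x}) and let w(v) denote the Lebesgue measure of {x ∈ ℝ : V(x) ≤ v}. Then w(v) − log(√v/(2π)) tends to 0 as v → +∞. -/
open MeasureTheory Filter

set_option maxHeartbeats 1000000

private lemma aux_one_sub_exp (t : ℝ) : t * Real.exp (-t) ≤ 1 - Real.exp (-t) := by
  have h1 := Real.add_one_le_exp t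
  have h2 : Real.exp (-t) * Real.exp t = 1 := by rw [← Real.exp_add]; simp
  nlinarith [Real.exp_pos (-t), mul_le_mul_of_nonneg_right h1 (Real.exp_pos (-t)).le]

private lemma aux_sqrt_atTop : Tendsto Real.sqrt atTop atTop := by
  refine tendsto_atTop_atTop.mpr fun K => ⟨(max K 0) ^ 2, fun x hx => ?_⟩
  calc K ≤ max K 0 := le_max_left _ _
    _ = Real.sqrt ((max K 0) ^ 2) := (Real.sqrt_sq (le_max_right _ _)).symm
    _ ≤ Real.sqrt x := Real.sqrt_le_sqrt hx

/-- The Tzitzeica potential `V(x) = 4π² 2^{−2/3} (2e^{3x} + e^{−6x})` has the same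
asymptotic width function `w(v) = |{x : V(x) ≤ v}| → log(√v/(2π))` as the Morse potential. -/
theorem tzitzeica_width_asymptotics :
    Tendsto (fun v : ℝ =>
        (volume {x : ℝ |
            4 * Real.pi ^ 2 * (2 : ℝ) ^ (-(2 / 3) : ℝ) *
              (2 * Real.exp (3 * x) + Real.exp (-6 * x)) ≤ v}).toReal -
          Real.log (Real.sqrt v / (2 * Real.pi)))
      atTop (nhds 0) := by
  set C : ℝ := 4 * Real.pi ^ 2 * (2 : ℝ) ^ (-(2 / 3) : ℝ) with hCdef
  have hπ : 0 < Real.pi := Real.pi_pos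
  have hCpos : 0 < C := by
    rw [hCdef]; positivity
  -- log of the constant
  have hlogC : Real.log C = (4/3) * Real.log 2 + 2 * Real.log Real.pi := by
    rw [hCdef, Real.log_mul (by positivity) (by positivity),
      Real.log_mul (by norm_num) (by positivity),
      Real.log_rpow (by norm_num : (0:ℝ) < 2), Real.log_pow,
      show (4:ℝ) = 2 ^ 2 by norm_num, Real.log_pow]
    push_cast; ring
  -- tendsto facts for the eventual hypotheses
  have hlog1 : Tendsto (fun v : ℝ => Real.log (v / C)) atTop atTop :=
    Real.tendsto_log_atTop.comp (tendsto_id.atTop_div_const hCpos)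
  have hlog2 : Tendsto (fun v : ℝ => Real.log (v / (2 * C))) atTop atTop :=
    Real.tendsto_log_atTop.comp (tendsto_id.atTop_div_const (by linarith))
  have E1 : ∀ᶠ v : ℝ in atTop, (1:ℝ) ≤ v := eventually_ge_atTop 1
  have E2 : ∀ᶠ v : ℝ in atTop, C / (3 * Real.exp (-3:ℝ)) ≤ Real.sqrt v :=
    aux_sqrt_atTop.eventually_ge_atTop _
  have E3 : ∀ᶠ v : ℝ in atTop, (2 * C) / (6 * Real.exp (-6:ℝ)) ≤ Real.sqrt v :=
    aux_sqrt_atTop.eventually_ge_atTop _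
  have E4 : ∀ᶠ v : ℝ in atTop, (6:ℝ) ≤ Real.log (v / C) := hlog1.eventually_ge_atTop 6
  have E5 : ∀ᶠ v : ℝ in atTop, (3:ℝ) ≤ Real.log (v / (2 * C)) := hlog2.eventually_ge_atTop 3
  -- the main eventual bound
  have key : ∀ᶠ v : ℝ in atTop,
      -(2 / Real.sqrt v) ≤
        (volume {x : ℝ | C * (2 * Real.exp (3 * x) + Real.exp (-6 * x)) ≤ v}).toReal -
          Real.log (Real.sqrt v / (2 * Real.pi)) ∧
        (volume {x : ℝ | C * (2 * Real.exp (3 * x) + Real.exp (-6 * x)) ≤ v}).toReal -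
          Real.log (Real.sqrt v / (2 * Real.pi)) ≤ 0 := by
    filter_upwards [E1, E2, E3, E4, E5] with v hv1 hv2 hv3 hv4 hv5
    have hv0 : (0:ℝ) < v := by linarith
    have hsv : 0 < Real.sqrt v := Real.sqrt_pos.mpr hv0
    have hsv1 : 1 ≤ Real.sqrt v := by
      calc (1:ℝ) = Real.sqrt 1 := by simp
        _ ≤ Real.sqrt v := Real.sqrt_le_sqrt hv1
    set δ : ℝ := 1 / Real.sqrt v with hδdef
    have hδ0 : 0 < δ := by positivity
    have hδ1 : δ ≤ 1 := by rw [hδdef, div_le_one hsv]; exact hsv1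
    set a : ℝ := -(1/6) * Real.log (v / C) with hadef
    set b : ℝ := (1/3) * Real.log (v / (2 * C)) with hbdef
    set S : Set ℝ := {x : ℝ | C * (2 * Real.exp (3 * x) + Real.exp (-6 * x)) ≤ v} with hSdef
    have ha1 : a ≤ -1 := by rw [hadef]; linarith
    have hb1 : 1 ≤ b := by rw [hbdef]; linarith
    have keyb : Real.exp (3 * b) = v / (2 * C) := by
      rw [show 3 * b = Real.log (v / (2 * C)) by rw [hbdef]; ring,
        Real.exp_log (by positivity)]
    have keya : Real.exp (-6 * a) = v / C := by
      rw [show -6 * a = Real.log (v / C) by rw [hadef]; ring,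
        Real.exp_log (by positivity)]
    -- upper bound: S ⊆ Ioo a b
    have hSsub : S ⊆ Set.Ioo a b := by
      intro x hx
      simp only [hSdef, Set.mem_setOf_eq] at hx
      have hp1 := Real.exp_pos (3 * x)
      have hp2 := Real.exp_pos (-6 * x)
      have h3 : Real.exp (3 * x) < v / (2 * C) := by
        rw [lt_div_iff₀ (by linarith)]; nlinarith
      have h6 : Real.exp (-6 * x) < v / C := by
        rw [lt_div_iff₀ hCpos]; nlinarith
      constructor
      · have := Real.exp_lt_exp.mp (keya ▸ h6)
        linarith
      · have := Real.exp_lt_exp.mp (keyb ▸ h3)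
        linarith
    have hfin : volume (Set.Ioo a b) ≠ ⊤ := by
      rw [Real.volume_Ioo]; exact ENNReal.ofReal_ne_top
    have hST : volume S ≠ ⊤ := ne_top_of_le_ne_top hfin (measure_mono hSsub)
    have hup : (volume S).toReal ≤ b - a := by
      have h := ENNReal.toReal_mono hfin (measure_mono hSsub)
      rwa [Real.volume_Ioo, ENNReal.toReal_ofReal (by linarith)] at h
    -- the width identity
    have hLv : Real.log (Real.sqrt v / (2 * Real.pi)) =
        (1/2) * Real.log v - (Real.log 2 + Real.log Real.pi) := by
      rw [Real.log_div (ne_of_gt hsv) (by positivity), Real.log_sqrt hv0.le,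
        Real.log_mul (by norm_num) (ne_of_gt hπ)]
      ring
    have hba_eq : b - a = Real.log (Real.sqrt v / (2 * Real.pi)) := by
      rw [hLv, hbdef, hadef,
        Real.log_div (ne_of_gt hv0) (by positivity),
        Real.log_div (ne_of_gt hv0) (ne_of_gt hCpos),
        Real.log_mul (by norm_num) (ne_of_gt hCpos), hlogC]
      ring
    -- lower bound: Icc (a + δ) (b - δ) ⊆ S
    have hvd : v * δ = Real.sqrt v := by
      rw [hδdef, mul_one_div, Real.div_sqrt]
    have hsub2 : Set.Icc (a + δ) (b - δ) ⊆ S := by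
      intro x hx
      obtain ⟨hx1, hx2⟩ := hx
      simp only [hSdef, Set.mem_setOf_eq]
      rcases le_or_gt x 0 with hx0 | hx0
      · -- x ≤ 0 : use lower-end bound
        have he1 : Real.exp (3 * x) ≤ 1 := Real.exp_le_one_iff.mpr (by linarith)
        have he2 : Real.exp (-6 * x) ≤ (v / C) * Real.exp (-(6 * δ)) := by
          calc Real.exp (-6 * x) ≤ Real.exp (-6 * (a + δ)) :=
                Real.exp_le_exp.mpr (by linarith)
            _ = Real.exp (-6 * a) * Real.exp (-(6 * δ)) := by
                rw [← Real.exp_add]; ring_nf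
            _ = (v / C) * Real.exp (-(6 * δ)) := by rw [keya]
        have hee : Real.exp (-6:ℝ) ≤ Real.exp (-(6 * δ)) :=
          Real.exp_le_exp.mpr (by linarith)
        have haux := aux_one_sub_exp (6 * δ)
        have h1 : (6 * δ) * Real.exp (-6:ℝ) ≤ 1 - Real.exp (-(6 * δ)) := by
          nlinarith [mul_le_mul_of_nonneg_left hee (by positivity : (0:ℝ) ≤ 6 * δ)]
        have h2 := mul_le_mul_of_nonneg_left h1 hv0.le
        have h3 : v * ((6 * δ) * Real.exp (-6:ℝ)) = Real.sqrt v * (6 * Real.exp (-6:ℝ)) := by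
          rw [← hvd]; ring
        have hE3' : 2 * C ≤ Real.sqrt v * (6 * Real.exp (-6:ℝ)) := by
          rw [div_le_iff₀ (by positivity)] at hv3
          linarith
        have hstep : 2 * C + v * Real.exp (-(6 * δ)) ≤ v := by linarith [h2, h3, hE3']
        have hsum : 2 * Real.exp (3 * x) + Real.exp (-6 * x) ≤
            2 + (v / C) * Real.exp (-(6 * δ)) := by linarith
        have := mul_le_mul_of_nonneg_left hsum hCpos.le
        have hCv : C * (2 + (v / C) * Real.exp (-(6 * δ))) =
            2 * C + v * Real.exp (-(6 * δ)) := by field_simp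
        linarith
      · -- x ≥ 0 : use upper-end bound
        have he1 : Real.exp (-6 * x) ≤ 1 := Real.exp_le_one_iff.mpr (by linarith)
        have he2 : Real.exp (3 * x) ≤ (v / (2 * C)) * Real.exp (-(3 * δ)) := by
          calc Real.exp (3 * x) ≤ Real.exp (3 * (b - δ)) :=
                Real.exp_le_exp.mpr (by linarith)
            _ = Real.exp (3 * b) * Real.exp (-(3 * δ)) := by
                rw [← Real.exp_add]; ring_nf
            _ = (v / (2 * C)) * Real.exp (-(3 * δ)) := by rw [keyb]
        have hee : Real.exp (-3:ℝ) ≤ Real.exp (-(3 * δ)) :=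
          Real.exp_le_exp.mpr (by linarith)
        have haux := aux_one_sub_exp (3 * δ)
        have h1 : (3 * δ) * Real.exp (-3:ℝ) ≤ 1 - Real.exp (-(3 * δ)) := by
          nlinarith [mul_le_mul_of_nonneg_left hee (by positivity : (0:ℝ) ≤ 3 * δ)]
        have h2 := mul_le_mul_of_nonneg_left h1 hv0.le
        have h3 : v * ((3 * δ) * Real.exp (-3:ℝ)) = Real.sqrt v * (3 * Real.exp (-3:ℝ)) := by
          rw [← hvd]; ring
        have hE2' : C ≤ Real.sqrt v * (3 * Real.exp (-3:ℝ)) := by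
          rw [div_le_iff₀ (by positivity)] at hv2
          linarith
        have hstep : C + v * Real.exp (-(3 * δ)) ≤ v := by linarith [h2, h3, hE2']
        have hsum : 2 * Real.exp (3 * x) + Real.exp (-6 * x) ≤
            2 * ((v / (2 * C)) * Real.exp (-(3 * δ))) + 1 := by linarith
        have := mul_le_mul_of_nonneg_left hsum hCpos.le
        have hCv : C * (2 * ((v / (2 * C)) * Real.exp (-(3 * δ))) + 1) =
            v * Real.exp (-(3 * δ)) + C := by field_simp
        linarith
    have hlow : (b - δ) - (a + δ) ≤ (volume S).toReal := by
      have h := ENNReal.toReal_mono hST (measure_mono hsub2)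
      rwa [Real.volume_Icc, ENNReal.toReal_ofReal (by linarith)] at h
    constructor
    · have : -(2 / Real.sqrt v) = ((b - δ) - (a + δ)) - (b - a) := by
        rw [hδdef]; ring
      rw [this, ← hba_eq]; linarith
    · rw [← hba_eq]; linarith
  -- squeeze
  have hg : Tendsto (fun v : ℝ => -(2 / Real.sqrt v)) atTop (nhds 0) := by
    rw [show (0:ℝ) = -0 by ring]
    exact (Tendsto.div_atTop tendsto_const_nhds aux_sqrt_atTop).neg
  refine tendsto_of_tendsto_of_tendsto_of_le_of_le' hg tendsto_const_nhds
    (key.mono fun v h => h.1) (key.mono fun v h => h.2)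
end
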